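/- (Theorem 2) Let Assumption 1 hold and suppose P ≤ 0. Let δ > 0 with B_δ ⊆ 𝕏 and let the matrix K satisfy L^0(x, Kx) + F^0(f(x, Kx)) − F^0(x) ≤ 0 for all x ∈ 𝕏. Fix the horizon N ≥ 2, let x_k ∈ 𝕏∖B_δ, and let α = (α^0,…,α^m) be any weight vector with α^i ∈ [0,1] and Σ_{i=0}^m α^i = 1. Let U_* be a feasible multi-horizon input at x_k minimizing α⊤𝐉(x_k, ·) over feasible multi-horizon inputs, u*_k its first input, x_{k+1} := f(x_k, u*_k), and U_s(x_{k+1}) the shifted candidate built from U_* with K and û. Then α⊤𝐉(x_{k+1}, U_s(x_{k+1})) ≤ α⊤𝐉(x_k, U_*). -/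

import Mathlib

noncomputable section

/-- A class-K function: continuous, strictly increasing on `[0,∞)`, vanishing at `0`. -/
def ClassK (σ : ℝ → ℝ) : Prop :=
  ContinuousOn σ (Set.Ici 0) ∧ StrictMonoOn σ (Set.Ici 0) ∧ σ 0 = 0

/-- Application of a matrix `K ∈ ℝ^{n_u × n_x}` to a state vector. -/
def matVec {nu nx : ℕ} (K : Matrix (Fin nu) (Fin nx) ℝ) (x : EuclideanSpace ℝ (Fin nx)) :
    EuclideanSpace ℝ (Fin nu) :=
  WithLp.toLp 2 (fun j => ∑ i, K j i * x i)

/-- The state trajectory of `x_{j+1} = f(x_j, u_j)` from `x` under input sequence `u`. -/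
def traj {E U : Type*} (f : E → U → E) (x : E) (u : ℕ → U) : ℕ → E
  | 0 => x
  | j + 1 => f (traj f x u j) (u j)

/-- Horizon-`N` cost `Jⁱ(x,(v_j)) = Σ_{j<N} L(x_j,v_j) + F(x_N)` of an input sequence. -/
def Jcost {E U : Type*} (f : E → U → E) (L : E → U → ℝ) (F : E → ℝ) (N : ℕ)
    (x : E) (v : ℕ → U) : ℝ :=
  (∑ j ∈ Finset.range N, L (traj f x v j) (v j)) + F (traj f x v N)

/-- Weighted multi-horizon cost `α⊤𝐉(x,U)`: component `0` is `J⁰(x,U⁰)`, component `i ≥ 1`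
is the average `(1/(N−1)) Σ_{p=0}^{N−2} Jⁱ(x,U_pⁱ)`.  `Up` is the primary horizon, and
`Ua i p` is the sub-horizon `U_pⁱ` toward alternative destination `i+1`. -/
def wcost {E U : Type*} {m : ℕ} (f : E → U → E) (L : Fin (m + 1) → E → U → ℝ)
    (F : Fin (m + 1) → E → ℝ) (N : ℕ) (α : Fin (m + 1) → ℝ)
    (x : E) (Up : ℕ → U) (Ua : Fin m → ℕ → ℕ → U) : ℝ :=
  α 0 * Jcost f (L 0) (F 0) N x Up +
    ∑ i : Fin m, α i.succ *
      (((N : ℝ) - 1)⁻¹ *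
        ∑ p ∈ Finset.range (N - 1), Jcost f (L i.succ) (F i.succ) N x (Ua i p))

/-- Feasibility of a multi-horizon input at `x`: all inputs lie in `𝕌`, all trajectory
states lie in `𝕏`, and each sub-horizon `U_pⁱ` shares its first `p+1` inputs with `U⁰`. -/
def Feas {E U : Type*} {m : ℕ} (f : E → U → E) (Xs : Set E) (Us : Set U) (N : ℕ)
    (x : E) (Up : ℕ → U) (Ua : Fin m → ℕ → ℕ → U) : Prop :=
  (∀ j < N, Up j ∈ Us) ∧ (∀ j ≤ N, traj f x Up j ∈ Xs) ∧
  (∀ i : Fin m, ∀ p < N - 1,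
    (∀ j < N, Ua i p j ∈ Us) ∧ (∀ j ≤ N, traj f x (Ua i p) j ∈ Xs)) ∧
  (∀ i : Fin m, ∀ p < N - 1, ∀ j ≤ p, Ua i p j = Up j)

/-- `U_*` is a feasible multi-horizon input minimizing `α⊤𝐉(x,·)` over feasible inputs. -/
def IsMinimizer {E U : Type*} {m : ℕ} (f : E → U → E) (L : Fin (m + 1) → E → U → ℝ)
    (F : Fin (m + 1) → E → ℝ) (Xs : Set E) (Us : Set U) (N : ℕ) (α : Fin (m + 1) → ℝ)
    (x : E) (Up : ℕ → U) (Ua : Fin m → ℕ → ℕ → U) : Prop :=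
  Feas f Xs Us N x Up Ua ∧
    ∀ Vp Va, Feas f Xs Us N x Vp Va →
      wcost f L F N α x Up Ua ≤ wcost f L F N α x Vp Va

/-- Shift of a horizon: drop the first input and append `last` at the end. -/
def shiftP {U : Type*} (N : ℕ) (Up : ℕ → U) (last : U) : ℕ → U :=
  fun j => if j < N - 1 then Up (j + 1) else last

/-- Shift of all alternative sub-horizons: drop their first input and append `uhat`. -/
def shiftA {U : Type*} {m : ℕ} (N : ℕ) (Ua : Fin m → ℕ → ℕ → U) (uhat : U) :
    Fin m → ℕ → ℕ → U :=
  fun i p j => if j < N - 1 then Ua i p (j + 1) else uhat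

/-- The baseline weight vector `α_b(x)`: `α_b⁰(x) = 1 − Σ_i γ^i‖x‖/max(μ,‖x−pⁱ‖)` and
`α_bⁱ(x) = γ^i‖x‖/max(μ,‖x−pⁱ‖)` for `i = 1,…,m`. -/
def baseWeight {nx m : ℕ} (γ : Fin m → ℝ) (μ : ℝ)
    (p : Fin (m + 1) → EuclideanSpace ℝ (Fin nx)) (x : EuclideanSpace ℝ (Fin nx)) :
    Fin (m + 1) → ℝ :=
  Fin.cons (1 - ∑ i : Fin m, γ i * ‖x‖ / max μ ‖x - p i.succ‖)
    (fun i => γ i * ‖x‖ / max μ ‖x - p i.succ‖)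

/-!
Shifting a horizon forward by one step removes its first stage cost `L(x_k, u_0) ≥ 0` and adds
one terminal step `L(x_N, v) + F(f(x_N, v)) − F(x_N)`. For the primary horizon this step uses
`v = K x_N` and is nonpositive by the assumption on `K`; for every alternative sub-horizon it
uses `v = û`, where it is at most `P ≤ 0`. Each component of `𝐉` therefore does not increase,
and neither does the nonnegative combination `α⊤𝐉`. Since all sub-horizons share the first
input `u_0`, every shifted horizon starts from the same state `x_{k+1}`.
-/

lemma ClassK.nonneg {σ : ℝ → ℝ} (hσ : ClassK σ) {r : ℝ} (hr : 0 ≤ r) : 0 ≤ σ r :=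
  hσ.2.2 ▸ hσ.2.1.monotoneOn (Set.mem_Ici.mpr le_rfl) (Set.mem_Ici.mpr hr) hr

section Shift

variable {E U : Type*} (f : E → U → E)

lemma traj_succ_eq_of_shift (x : E) {u v : ℕ → U} {j : ℕ}
    (hv : ∀ k < j, v k = u (k + 1)) :
    traj f (f x (u 0)) v j = traj f x u (j + 1) := by
  induction j with
  | zero => rfl
  | succ j ih =>
    change f (traj f (f x (u 0)) v j) (v j) = f (traj f x u (j + 1)) (u (j + 1))
    rw [ih fun k hk => hv k (by omega), hv j (by omega)]

lemma Jcost_shiftP (L : E → U → ℝ) (F : E → ℝ) (n : ℕ) (x : E) (u : ℕ → U) (last : U) :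
    Jcost f L F (n + 1) (f x (u 0)) (shiftP (n + 1) u last) =
      Jcost f L F (n + 1) x u - L x (u 0) +
        (L (traj f x u (n + 1)) last + F (f (traj f x u (n + 1)) last)
          - F (traj f x u (n + 1))) := by
  have hshift : ∀ k < n, shiftP (n + 1) u last k = u (k + 1) := fun k hk => if_pos hk
  have hlast : shiftP (n + 1) u last n = last := if_neg (by omega)
  have htraj : ∀ j ≤ n, traj f (f x (u 0)) (shiftP (n + 1) u last) j = traj f x u (j + 1) :=
    fun j hj => traj_succ_eq_of_shift f x fun k hk => hshift k (by omega)
  have hsum : ∑ j ∈ Finset.range n,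
      L (traj f (f x (u 0)) (shiftP (n + 1) u last) j) (shiftP (n + 1) u last j) =
        ∑ j ∈ Finset.range n, L (traj f x u (j + 1)) (u (j + 1)) :=
    Finset.sum_congr rfl fun j hj => by
      rw [htraj j (Finset.mem_range.mp hj).le, hshift j (Finset.mem_range.mp hj)]
  have hend : traj f (f x (u 0)) (shiftP (n + 1) u last) (n + 1) =
      f (traj f x u (n + 1)) last := by
    change f _ _ = _
    rw [htraj n le_rfl, hlast]
  have hstart : traj f x u 0 = x := rfl
  unfold Jcost
  rw [Finset.sum_range_succ, Finset.sum_range_succ', hsum, htraj n le_rfl, hlast, hend, hstart]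
  ring

lemma Jcost_shiftP_le {L : E → U → ℝ} {F : E → ℝ} {N : ℕ} (hN : 1 ≤ N) {x : E}
    {u : ℕ → U} {last : U} (hL : 0 ≤ L x (u 0))
    (hstep : L (traj f x u N) last + F (f (traj f x u N) last) - F (traj f x u N) ≤ 0) :
    Jcost f L F N (f x (u 0)) (shiftP N u last) ≤ Jcost f L F N x u := by
  obtain ⟨n, rfl⟩ : ∃ n, N = n + 1 := ⟨N - 1, by omega⟩
  rw [Jcost_shiftP]
  linarith

end Shift

lemma shiftA_apply {U : Type*} {m : ℕ} (N : ℕ) (Ua : Fin m → ℕ → ℕ → U) (uhat : U)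
    (i : Fin m) (p : ℕ) : shiftA N Ua uhat i p = shiftP N (Ua i p) uhat := rfl

lemma wcost_le_wcost {E U : Type*} {m : ℕ} {f : E → U → E} {L : Fin (m + 1) → E → U → ℝ}
    {F : Fin (m + 1) → E → ℝ} {N : ℕ} (hN : 1 ≤ N) {α : Fin (m + 1) → ℝ} (hα : ∀ i, 0 ≤ α i)
    {x y : E} {Up Vp : ℕ → U} {Ua Va : Fin m → ℕ → ℕ → U}
    (hprim : Jcost f (L 0) (F 0) N y Vp ≤ Jcost f (L 0) (F 0) N x Up)
    (halt : ∀ i : Fin m, ∀ p < N - 1,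
      Jcost f (L i.succ) (F i.succ) N y (Va i p) ≤ Jcost f (L i.succ) (F i.succ) N x (Ua i p)) :
    wcost f L F N α y Vp Va ≤ wcost f L F N α x Up Ua := by
  have hcoef : (0 : ℝ) ≤ ((N : ℝ) - 1)⁻¹ :=
    inv_nonneg.mpr (sub_nonneg.mpr (by exact_mod_cast hN))
  unfold wcost
  gcongr with i _ p hp
  · exact hα 0
  · exact hα i.succ
  · exact halt i p (Finset.mem_range.mp hp)

theorem stmt_8_general {nx nu m : ℕ}
    (f : EuclideanSpace ℝ (Fin nx) → EuclideanSpace ℝ (Fin nu) → EuclideanSpace ℝ (Fin nx))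
    (Xs : Set (EuclideanSpace ℝ (Fin nx)))
    (Us : Set (EuclideanSpace ℝ (Fin nu)))
    (p : Fin (m + 1) → EuclideanSpace ℝ (Fin nx))
    (L : Fin (m + 1) → EuclideanSpace ℝ (Fin nx) → EuclideanSpace ℝ (Fin nu) → ℝ)
    (F : Fin (m + 1) → EuclideanSpace ℝ (Fin nx) → ℝ)
    -- Assumption 1
    (σ1 : ℝ → ℝ) (hσ1 : ClassK σ1)
    (hL_lb : ∀ i, ∀ x ∈ Xs, ∀ u ∈ Us, σ1 ‖x - p i‖ ≤ L i x u)
    -- P = min-max constant, attained at û, with P ≤ 0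
    (P : ℝ) (uhat : EuclideanSpace ℝ (Fin nu))
    (huhat : uhat ∈ Us ∧ IsGreatest
        ((fun q : Fin (m + 1) × EuclideanSpace ℝ (Fin nx) =>
            L q.1 q.2 uhat + F q.1 (f q.2 uhat) - F q.1 q.2) ''
          ((Set.univ : Set (Fin (m + 1))) ×ˢ Xs)) P)
    (hPnonpos : P ≤ 0)
    -- δ and the matrix K
    (K : Matrix (Fin nu) (Fin nx) ℝ)
    (hK : ∀ x ∈ Xs,
      L 0 x (matVec K x) + F 0 (f x (matVec K x)) - F 0 x ≤ 0)
    -- horizon, current state, weight vector, and the optimizer U_*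
    (N : ℕ) (hN : 2 ≤ N)
    (xk : EuclideanSpace ℝ (Fin nx))
    (α : Fin (m + 1) → ℝ) (hα : ∀ i, α i ∈ Set.Icc (0 : ℝ) 1)
    (Up : ℕ → EuclideanSpace ℝ (Fin nu))
    (Ua : Fin m → ℕ → ℕ → EuclideanSpace ℝ (Fin nu))
    (hopt : IsMinimizer f L F Xs Us N α xk Up Ua) :
    wcost f L F N α (f xk (Up 0))
        (shiftP N Up (matVec K (traj f xk Up N))) (shiftA N Ua uhat)
      ≤ wcost f L F N α xk Up Ua := by
  obtain ⟨⟨hUpU, hUpX, hUaFeas, hshare⟩, -⟩ := hopt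
  have hL : ∀ i, ∀ x ∈ Xs, ∀ u ∈ Us, 0 ≤ L i x u := fun i x hx u hu =>
    (hσ1.nonneg (norm_nonneg _)).trans (hL_lb i x hx u hu)
  have huhat_step : ∀ i, ∀ x ∈ Xs, L i x uhat + F i (f x uhat) - F i x ≤ 0 := fun i x hx =>
    (huhat.2.2 ⟨(i, x), ⟨Set.mem_univ i, hx⟩, rfl⟩).trans hPnonpos
  have hxk : xk ∈ Xs := hUpX 0 (Nat.zero_le N)
  refine wcost_le_wcost (by omega) (fun i => (hα i).1) ?_ fun i p hp => ?_
  · exact Jcost_shiftP_le f (by omega) (hL 0 xk hxk _ (hUpU 0 (by omega)))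
      (hK _ (hUpX N le_rfl))
  · obtain ⟨hUaU, hUaX⟩ := hUaFeas i p hp
    rw [shiftA_apply, ← hshare i p hp 0 (Nat.zero_le p)]
    exact Jcost_shiftP_le f (by omega) (hL _ xk hxk _ (hUaU 0 (by omega)))
      (huhat_step _ _ (hUaX N le_rfl))

/-- Theorem 2: let Assumption 1 hold and suppose `P ≤ 0`.  Let `δ > 0` with
`B_δ ⊆ 𝕏` and let `K` satisfy `L⁰(x,Kx)+F⁰(f(x,Kx))−F⁰(x) ≤ 0` for all `x ∈ 𝕏`.  For any
`x_k ∈ 𝕏∖B_δ`, any weight vector `α` with `αⁱ ∈ [0,1]` and `Σ αⁱ = 1`, and `U_*` a feasible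
minimizer of `α⊤𝐉(x_k,·)`, the shifted candidate `U_s(x_{k+1})` built with `K` and `û`
satisfies `α⊤𝐉(x_{k+1}, U_s(x_{k+1})) ≤ α⊤𝐉(x_k, U_*)`, where `x_{k+1} = f(x_k, u*_k)`. -/
theorem stmt_8 {nx nu m : ℕ}
    (f : EuclideanSpace ℝ (Fin nx) → EuclideanSpace ℝ (Fin nu) → EuclideanSpace ℝ (Fin nx))
    (hf : Continuous fun q : EuclideanSpace ℝ (Fin nx) × EuclideanSpace ℝ (Fin nu) =>
      f q.1 q.2)
    (Xs : Set (EuclideanSpace ℝ (Fin nx))) (hXc : IsCompact Xs)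
    (Us : Set (EuclideanSpace ℝ (Fin nu))) (hUc : IsCompact Us)
    (p : Fin (m + 1) → EuclideanSpace ℝ (Fin nx)) (hp0 : p 0 = 0)
    (L : Fin (m + 1) → EuclideanSpace ℝ (Fin nx) → EuclideanSpace ℝ (Fin nu) → ℝ)
    (F : Fin (m + 1) → EuclideanSpace ℝ (Fin nx) → ℝ)
    -- Assumption 1
    (hLc : ∀ i, Continuous fun q :
      EuclideanSpace ℝ (Fin nx) × EuclideanSpace ℝ (Fin nu) => L i q.1 q.2)
    (hFc : ∀ i, Continuous (F i))
    (hLp : ∀ i, L i (p i) 0 = 0) (hFp : ∀ i, F i (p i) = 0)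
    (σ1 σ2 : ℝ → ℝ) (hσ1 : ClassK σ1) (hσ2 : ClassK σ2)
    (hL_lb : ∀ i, ∀ x ∈ Xs, ∀ u ∈ Us, σ1 ‖x - p i‖ ≤ L i x u)
    (hF_lb : ∀ i, ∀ x ∈ Xs, σ1 ‖x - p i‖ ≤ F i x)
    (hF_ub : ∀ i, ∀ x ∈ Xs, F i x ≤ σ2 ‖x - p i‖)
    -- P = min-max constant, attained at û, with P ≤ 0
    (P : ℝ) (uhat : EuclideanSpace ℝ (Fin nu))
    (hP : IsLeast {y : ℝ | ∃ u ∈ Us, IsGreatest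
        ((fun q : Fin (m + 1) × EuclideanSpace ℝ (Fin nx) =>
            L q.1 q.2 u + F q.1 (f q.2 u) - F q.1 q.2) ''
          ((Set.univ : Set (Fin (m + 1))) ×ˢ Xs)) y} P)
    (huhat : uhat ∈ Us ∧ IsGreatest
        ((fun q : Fin (m + 1) × EuclideanSpace ℝ (Fin nx) =>
            L q.1 q.2 uhat + F q.1 (f q.2 uhat) - F q.1 q.2) ''
          ((Set.univ : Set (Fin (m + 1))) ×ˢ Xs)) P)
    (hPnonpos : P ≤ 0)
    -- δ and the matrix K
    (δ : ℝ) (hδ : 0 < δ)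
    (hball : Metric.ball (0 : EuclideanSpace ℝ (Fin nx)) δ ⊆ Xs)
    (K : Matrix (Fin nu) (Fin nx) ℝ)
    (hK : ∀ x ∈ Xs,
      L 0 x (matVec K x) + F 0 (f x (matVec K x)) - F 0 x ≤ 0)
    -- horizon, current state, weight vector, and the optimizer U_*
    (N : ℕ) (hN : 2 ≤ N)
    (xk : EuclideanSpace ℝ (Fin nx)) (hxk : xk ∈ Xs \ Metric.ball 0 δ)
    (α : Fin (m + 1) → ℝ) (hα : ∀ i, α i ∈ Set.Icc (0 : ℝ) 1) (hαsum : ∑ i, α i = 1)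
    (Up : ℕ → EuclideanSpace ℝ (Fin nu))
    (Ua : Fin m → ℕ → ℕ → EuclideanSpace ℝ (Fin nu))
    (hopt : IsMinimizer f L F Xs Us N α xk Up Ua) :
    wcost f L F N α (f xk (Up 0))
        (shiftP N Up (matVec K (traj f xk Up N))) (shiftA N Ua uhat)
      ≤ wcost f L F N α xk Up Ua :=
  stmt_8_general f Xs Us p L F σ1 hσ1 hL_lb P uhat huhat hPnonpos K hK N hN xk α hα Up Ua hopt
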